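/- arXiv:2311.18022 — 5 statements merged into one kernel-verified Lean document; each statement's English description precedes it below -/
import Mathlib

section
/- Let W_n = T_{a_n} ∘ ... ∘ T_{a_0} be a composition of triangle functions with peaks a_i ∈ (0,1). Then the set V_n = {x ∈ [0,1] : W_n(x) = 0} has exactly 2^n + 1 elements and the set P_n = {x ∈ [0,1] : W_n(x) = 1} has exactly 2^n elements, and between any two consecutive zeros of W_n there is exactly one point where W_n equals 1. -/
noncomputable def T (a : ℝ) (x : ℝ) : ℝ :=
  if x ≤ a then x / a else 1 - (x - a) / (1 - a)

noncomputable def W (a : ℕ → ℝ) : ℕ → ℝ → ℝ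
  | 0 => T (a 0)
  | n + 1 => fun x => T (a (n + 1)) (W a n x)

namespace TentAux

lemma T_of_le {a b : ℝ} (hb : b ≤ a) : T a b = b / a := if_pos hb

lemma T_of_ge {a b : ℝ} (ha : 0 < a) (hb : a ≤ b) : T a b = 1 - (b - a) / (1 - a) := by
  rcases eq_or_lt_of_le hb with h | h
  · rw [← h]; simp [T, div_self ha.ne']
  · exact if_neg (not_le.mpr h)

lemma T_zero {a : ℝ} (ha : 0 ≤ a) : T a 0 = 0 := by simp [T, ha]

lemma T_one {a : ℝ} (ha : a ∈ Set.Ioo (0:ℝ) 1) : T a 1 = 0 := by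
  rw [T_of_ge ha.1 ha.2.le, div_self (by linarith [ha.2] : (1:ℝ) - a ≠ 0)]
  ring

lemma T_peak {a : ℝ} (ha : 0 < a) : T a a = 1 := by
  rw [T_of_le le_rfl, div_self ha.ne']

lemma T_cont {a : ℝ} (ha : a ∈ Set.Ioo (0:ℝ) 1) : Continuous (T a) := by
  refine Continuous.if_le (continuous_id.div_const a) (by fun_prop) continuous_id
    continuous_const ?_
  intro x hx
  rw [hx, div_self ha.1.ne']
  simp

structure Inv (f : ℝ → ℝ) (x : ℕ → ℝ) (k : ℕ) : Prop where
  zero : x 0 = 0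
  one : x k = 1
  adj : ∀ j < k, x j < x (j + 1)
  val : ∀ j ≤ k, f (x j) = if Even j then 0 else 1
  inc : ∀ j < k, Even j → StrictMonoOn f (Set.Icc (x j) (x (j + 1)))
  dec : ∀ j < k, ¬ Even j → StrictAntiOn f (Set.Icc (x j) (x (j + 1)))

variable {f : ℝ → ℝ} {x : ℕ → ℝ} {k : ℕ}

lemma Inv.mono (h : Inv f x k) : ∀ {i j}, i < j → j ≤ k → x i < x j := by
  intro i j hij hjk
  induction j with
  | zero => omega
  | succ j ih =>
    rcases Nat.lt_succ_iff_lt_or_eq.mp hij with h' | h'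
    · exact (ih h' (by omega)).trans (h.adj j (by omega))
    · subst h'; exact h.adj i (by omega)

lemma Inv.mono_le (h : Inv f x k) {i j : ℕ} (hij : i ≤ j) (hjk : j ≤ k) : x i ≤ x j := by
  rcases eq_or_lt_of_le hij with h' | h'
  · rw [h']
  · exact (h.mono h' hjk).le

lemma Inv.lt_iff (h : Inv f x k) {i j : ℕ} (hi : i ≤ k) (hj : j ≤ k) : x i < x j ↔ i < j := by
  constructor
  · intro hx
    by_contra hc
    exact absurd (h.mono_le (by omega) hi) (not_le.mpr hx)
  · intro hij; exact h.mono hij hj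

lemma Inv.mem (h : Inv f x k) {j : ℕ} (hj : j ≤ k) : x j ∈ Set.Icc (0:ℝ) 1 := by
  constructor
  · rw [← h.zero]; exact h.mono_le (Nat.zero_le _) hj
  · rw [← h.one]; exact h.mono_le hj le_rfl

lemma Inv.eq_node (h : Inv f x k) {y : ℝ} (hy : y ∈ Set.Icc (0:ℝ) 1)
    (hv : f y = 0 ∨ f y = 1) : ∃ j ≤ k, y = x j := by
  classical
  set P : ℕ → Prop := fun j => x j ≤ y with hP
  have hP0 : P 0 := by rw [hP]; simp only; rw [h.zero]; exact hy.1
  set j := Nat.findGreatest P k with hj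
  have hjk : j ≤ k := Nat.findGreatest_le k
  have hPj : P j := Nat.findGreatest_spec (Nat.zero_le k) hP0
  rcases eq_or_lt_of_le hjk with hjk' | hjk'
  · refine ⟨j, hjk, le_antisymm ?_ hPj⟩
    rw [hjk', h.one]; exact hy.2
  · have hnext : ¬ P (j + 1) := Nat.findGreatest_is_greatest (Nat.lt_succ_self j) (by omega)
    have hlt : y < x (j + 1) := not_le.mp hnext
    rcases eq_or_lt_of_le hPj with heq | hlt2
    · exact ⟨j, hjk, heq.symm⟩
    · exfalso
      have hmem : y ∈ Set.Icc (x j) (x (j + 1)) := ⟨hPj, hlt.le⟩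
      have hl : x j ∈ Set.Icc (x j) (x (j + 1)) := ⟨le_rfl, (h.adj j hjk').le⟩
      have hr : x (j + 1) ∈ Set.Icc (x j) (x (j + 1)) := ⟨(h.adj j hjk').le, le_rfl⟩
      have hvj := h.val j hjk
      have hvj1 := h.val (j + 1) hjk'
      by_cases hev : Even j
      · have h1 : f (x j) < f y := h.inc j hjk' hev hl hmem hlt2
        have h2 : f y < f (x (j + 1)) := h.inc j hjk' hev hmem hr hlt
        rw [hvj, if_pos hev] at h1
        rw [hvj1, if_neg (by simp [Nat.even_add_one, hev])] at h2
        rcases hv with hv | hv <;> rw [hv] at h1 h2 <;> linarith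
      · have h1 : f y < f (x j) := h.dec j hjk' hev hl hmem hlt2
        have h2 : f (x (j + 1)) < f y := h.dec j hjk' hev hmem hr hlt
        rw [hvj, if_neg hev] at h1
        rw [hvj1, if_pos (by simp [Nat.even_add_one, hev])] at h2
        rcases hv with hv | hv <;> rw [hv] at h1 h2 <;> linarith


variable {f : ℝ → ℝ} {b : ℝ} {s : Set ℝ}

lemma comp_mono_of_le (hb : b ∈ Set.Ioo (0:ℝ) 1)
    (hm : StrictMonoOn f s) (hle : ∀ t ∈ s, f t ≤ b) :
    StrictMonoOn (fun t => T b (f t)) s := by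
  intro u hu v hv huv
  have h0 : (0:ℝ) < b := hb.1
  simp only
  rw [T_of_le (hle u hu), T_of_le (hle v hv)]
  have := hm hu hv huv
  gcongr

lemma comp_mono_of_ge (hb : b ∈ Set.Ioo (0:ℝ) 1)
    (hm : StrictAntiOn f s) (hge : ∀ t ∈ s, b ≤ f t) :
    StrictMonoOn (fun t => T b (f t)) s := by
  intro u hu v hv huv
  have h1b : (0:ℝ) < 1 - b := by linarith [hb.2]
  simp only
  rw [T_of_ge hb.1 (hge u hu), T_of_ge hb.1 (hge v hv)]
  have h2 := hm hu hv huv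
  have : (f v - b) / (1 - b) < (f u - b) / (1 - b) := by gcongr
  linarith

lemma comp_anti_of_ge (hb : b ∈ Set.Ioo (0:ℝ) 1)
    (hm : StrictMonoOn f s) (hge : ∀ t ∈ s, b ≤ f t) :
    StrictAntiOn (fun t => T b (f t)) s := by
  intro u hu v hv huv
  have h1b : (0:ℝ) < 1 - b := by linarith [hb.2]
  simp only
  rw [T_of_ge hb.1 (hge u hu), T_of_ge hb.1 (hge v hv)]
  have h2 := hm hu hv huv
  have : (f u - b) / (1 - b) < (f v - b) / (1 - b) := by gcongr
  linarith

lemma comp_anti_of_le (hb : b ∈ Set.Ioo (0:ℝ) 1)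
    (hm : StrictAntiOn f s) (hle : ∀ t ∈ s, f t ≤ b) :
    StrictAntiOn (fun t => T b (f t)) s := by
  intro u hu v hv huv
  have h0 : (0:ℝ) < b := hb.1
  simp only
  rw [T_of_le (hle u hu), T_of_le (hle v hv)]
  have := hm hu hv huv
  gcongr

lemma step (hb : b ∈ Set.Ioo (0:ℝ) 1) (hf : Continuous f) (h : Inv f x k) :
    ∃ y : ℕ → ℝ, Inv (fun t => T b (f t)) y (2 * k) := by
  classical
  have hc : ∀ j, ∃ c, j < k → (c ∈ Set.Ioo (x j) (x (j + 1)) ∧ f c = b) := by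
    intro j
    by_cases hjk : j < k
    · have hv1 := h.val j hjk.le
      have hv2 := h.val (j + 1) hjk
      have hev1 : Even (j + 1) ↔ ¬ Even j := by simp [Nat.even_add_one]
      by_cases hev : Even j
      · rw [if_pos hev] at hv1
        rw [if_neg (by simp [Nat.even_add_one, hev])] at hv2
        have hsub := intermediate_value_Ioo (h.adj j hjk).le hf.continuousOn
        rw [hv1, hv2] at hsub
        obtain ⟨c, hcm, hfc⟩ := hsub ⟨hb.1, hb.2⟩
        exact ⟨c, fun _ => ⟨hcm, hfc⟩⟩
      · rw [if_neg hev] at hv1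
        rw [if_pos (by simp [Nat.even_add_one, hev])] at hv2
        have hsub := intermediate_value_Ioo' (h.adj j hjk).le hf.continuousOn
        rw [hv1, hv2] at hsub
        obtain ⟨c, hcm, hfc⟩ := hsub ⟨hb.1, hb.2⟩
        exact ⟨c, fun _ => ⟨hcm, hfc⟩⟩
    · exact ⟨0, fun hj => absurd hj hjk⟩
  choose c hc using hc
  refine ⟨fun j => if Even j then x (j / 2) else c (j / 2), ?_, ?_, ?_, ?_, ?_, ?_⟩
  · simpa using h.zero
  · have : Even (2 * k) := ⟨k, by ring⟩
    simp only [if_pos this]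
    rw [Nat.mul_div_cancel_left k (by norm_num)]
    exact h.one
  · intro j hj
    rcases Nat.even_or_odd j with ⟨i, hi⟩ | ⟨i, hi⟩
    · have hji : j = 2 * i := by omega
      subst hji
      have hik : i < k := by omega
      have he1 : Even (2 * i) := ⟨i, by ring⟩
      have he2 : ¬ Even (2 * i + 1) := by simp [Nat.even_add_one, he1]
      simp only [if_pos he1, if_neg he2]
      rw [Nat.mul_div_cancel_left i (by norm_num), (by omega : (2 * i + 1) / 2 = i)]
      exact ((hc i hik).1).1
    · subst hi
      have hik : i + 1 ≤ k := by omega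
      have he1 : ¬ Even (2 * i + 1) := by simp [Nat.even_add_one, Nat.even_mul]
      have he2 : Even (2 * i + 1 + 1) := by simpa [Nat.even_add_one] using he1
      simp only [if_neg he1, if_pos he2]
      rw [(by omega : (2 * i + 1) / 2 = i), (by omega : (2 * i + 1 + 1) / 2 = i + 1)]
      exact ((hc i (by omega)).1).2
  · intro j hj
    rcases Nat.even_or_odd j with ⟨i, hi⟩ | ⟨i, hi⟩
    · have hji : j = 2 * i := by omega
      subst hji
      have hik : i ≤ k := by omega
      have he1 : Even (2 * i) := ⟨i, by ring⟩
      simp only [if_pos he1]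
      rw [Nat.mul_div_cancel_left i (by norm_num)]
      have hv := h.val i hik
      by_cases hev : Even i
      · rw [if_pos hev] at hv
        rw [hv]
        exact T_zero hb.1.le
      · rw [if_neg hev] at hv
        rw [hv]
        exact T_one hb
    · subst hi
      have he1 : ¬ Even (2 * i + 1) := by simp [Nat.even_add_one, Nat.even_mul]
      simp only [if_neg he1]
      rw [(by omega : (2 * i + 1) / 2 = i), (hc i (by omega)).2]
      exact T_peak hb.1
  · intro j hj hev
    obtain ⟨i, hi⟩ := hev
    have hji : j = 2 * i := by omega
    subst hji
    have hik : i < k := by omega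
    have he1 : Even (2 * i) := ⟨i, by ring⟩
    have he2 : ¬ Even (2 * i + 1) := by simp [Nat.even_add_one, he1]
    simp only [if_pos he1, if_neg he2]
    rw [Nat.mul_div_cancel_left i (by norm_num), (by omega : (2 * i + 1) / 2 = i)]
    obtain ⟨⟨hc1, hc2⟩, hc3⟩ := hc i hik
    have hsub : Set.Icc (x i) (c i) ⊆ Set.Icc (x i) (x (i + 1)) :=
      Set.Icc_subset_Icc le_rfl hc2.le
    by_cases hev : Even i
    · have hm := (h.inc i hik hev).mono hsub
      refine comp_mono_of_le hb hm ?_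
      intro t ht
      calc f t ≤ f (c i) := (h.inc i hik hev).monotoneOn (hsub ht) ⟨hc1.le, hc2.le⟩ ht.2
        _ = b := hc3
    · have hm := (h.dec i hik hev).mono hsub  -- StrictAntiOn restricted
      refine comp_mono_of_ge hb hm ?_
      intro t ht
      calc b = f (c i) := hc3.symm
        _ ≤ f t := (h.dec i hik hev).antitoneOn (hsub ht) ⟨hc1.le, hc2.le⟩ ht.2
  · intro j hj hev
    have : ∃ i, j = 2 * i + 1 := by
      rcases Nat.even_or_odd j with he | ⟨i, hi⟩
      · exact absurd he hev
      · exact ⟨i, hi⟩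
    obtain ⟨i, rfl⟩ := this
    have hik : i < k := by omega
    have he1 : ¬ Even (2 * i + 1) := by simp [Nat.even_add_one, Nat.even_mul]
    have he2 : Even (2 * i + 1 + 1) := by simpa [Nat.even_add_one] using he1
    simp only [if_neg he1, if_pos he2]
    rw [(by omega : (2 * i + 1) / 2 = i), (by omega : (2 * i + 1 + 1) / 2 = i + 1)]
    obtain ⟨⟨hc1, hc2⟩, hc3⟩ := hc i hik
    have hsub : Set.Icc (c i) (x (i + 1)) ⊆ Set.Icc (x i) (x (i + 1)) :=
      Set.Icc_subset_Icc hc1.le le_rfl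
    by_cases hev : Even i
    · have hm := (h.inc i hik hev).mono hsub
      refine comp_anti_of_ge hb hm ?_
      intro t ht
      calc b = f (c i) := hc3.symm
        _ ≤ f t := (h.inc i hik hev).monotoneOn ⟨hc1.le, hc2.le⟩ (hsub ht) ht.1
    · have hm := (h.dec i hik hev).mono hsub
      refine comp_anti_of_le hb hm ?_
      intro t ht
      calc f t ≤ f (c i) := (h.dec i hik hev).antitoneOn ⟨hc1.le, hc2.le⟩ (hsub ht) ht.1
        _ = b := hc3

lemma W_cont (a : ℕ → ℝ) (ha : ∀ i, a i ∈ Set.Ioo (0:ℝ) 1) (n : ℕ) : Continuous (W a n) := by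
  induction n with
  | zero => exact T_cont (ha 0)
  | succ n ih => exact (T_cont (ha (n + 1))).comp ih

lemma exists_inv (a : ℕ → ℝ) (ha : ∀ i, a i ∈ Set.Ioo (0:ℝ) 1) (n : ℕ) :
    ∃ x, Inv (W a n) x (2 ^ (n + 1)) := by
  induction n with
  | zero =>
    have hid : Inv (fun t : ℝ => t) (fun j => (j : ℝ)) 1 := by
      refine ⟨by norm_num, by norm_num, ?_, ?_, ?_, ?_⟩
      · intro j hj
        interval_cases j
        norm_num
      · intro j hj
        interval_cases j <;> simp
      · intro j hj hev
        interval_cases j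
        exact fun u _ v _ h => h
      · intro j hj hev
        interval_cases j
        simp at hev
    obtain ⟨y, hy⟩ := step (ha 0) continuous_id hid
    exact ⟨y, hy⟩
  | succ n ih =>
    obtain ⟨x, hx⟩ := ih
    obtain ⟨y, hy⟩ := step (ha (n + 1)) (W_cont a ha n) hx
    refine ⟨y, ?_⟩
    have h2 : 2 * 2 ^ (n + 1) = 2 ^ (n + 1 + 1) := by ring
    rw [← h2]
    exact hy

lemma zero_set_eq (h : Inv f x (2 * k)) :
    {t ∈ Set.Icc (0:ℝ) 1 | f t = 0} = ↑((Finset.Iic k).image (fun i => x (2 * i))) := by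
  ext t
  simp only [Set.mem_setOf_eq, Finset.coe_image, Set.mem_image, Finset.mem_coe,
    Finset.mem_Iic]
  constructor
  · rintro ⟨ht1, ht2⟩
    obtain ⟨j, hjk, rfl⟩ := h.eq_node ht1 (Or.inl ht2)
    have hv := h.val j hjk
    have hev : Even j := by
      by_contra hc
      rw [if_neg hc, ht2] at hv
      norm_num at hv
    obtain ⟨i, hi⟩ := hev
    exact ⟨i, by omega, by rw [(by omega : 2 * i = j)]⟩
  · rintro ⟨i, hik, rfl⟩
    have hjk : 2 * i ≤ 2 * k := by omega
    refine ⟨h.mem hjk, ?_⟩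
    have hv := h.val (2 * i) hjk
    rwa [if_pos ⟨i, by ring⟩] at hv

lemma one_set_eq (h : Inv f x (2 * k)) :
    {t ∈ Set.Icc (0:ℝ) 1 | f t = 1} = ↑((Finset.Iio k).image (fun i => x (2 * i + 1))) := by
  ext t
  simp only [Set.mem_setOf_eq, Finset.coe_image, Set.mem_image, Finset.mem_coe,
    Finset.mem_Iio]
  constructor
  · rintro ⟨ht1, ht2⟩
    obtain ⟨j, hjk, rfl⟩ := h.eq_node ht1 (Or.inr ht2)
    have hv := h.val j hjk
    have hev : ¬ Even j := by
      intro hc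
      rw [if_pos hc, ht2] at hv
      norm_num at hv
    obtain ⟨i, hi⟩ := Nat.odd_iff.mpr (Nat.not_even_iff.mp hev)
    exact ⟨i, by omega, by rw [(by omega : 2 * i + 1 = j)]⟩
  · rintro ⟨i, hik, rfl⟩
    have hjk : 2 * i + 1 ≤ 2 * k := by omega
    refine ⟨h.mem hjk, ?_⟩
    have hv := h.val (2 * i + 1) hjk
    rwa [if_neg (by simp [Nat.even_add_one, Nat.even_mul])] at hv

lemma zero_set_card (h : Inv f x (2 * k)) :
    ({t ∈ Set.Icc (0:ℝ) 1 | f t = 0}).ncard = k + 1 := by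
  rw [zero_set_eq h, Set.ncard_coe_finset, Finset.card_image_of_injOn, Nat.card_Iic]
  intro i hi i' hi' hii
  simp only [Finset.coe_Iic, Set.mem_Iic] at hi hi'
  by_contra hne
  rcases Nat.lt_or_ge i i' with hlt | hge
  · exact absurd hii (ne_of_lt (h.mono (by omega) (by omega)))
  · have : i' < i := by omega
    exact absurd hii.symm (ne_of_lt (h.mono (by omega) (by omega)))

lemma one_set_card (h : Inv f x (2 * k)) :
    ({t ∈ Set.Icc (0:ℝ) 1 | f t = 1}).ncard = k := by
  rw [one_set_eq h, Set.ncard_coe_finset, Finset.card_image_of_injOn, Nat.card_Iio]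
  intro i hi i' hi' hii
  simp only [Finset.coe_Iio, Set.mem_Iio] at hi hi'
  by_contra hne
  rcases Nat.lt_or_ge i i' with hlt | hge
  · exact absurd hii (ne_of_lt (h.mono (by omega) (by omega)))
  · have : i' < i := by omega
    exact absurd hii.symm (ne_of_lt (h.mono (by omega) (by omega)))

lemma between (h : Inv f x (2 * k)) :
    ∀ u ∈ {t ∈ Set.Icc (0:ℝ) 1 | f t = 0},
    ∀ v ∈ {t ∈ Set.Icc (0:ℝ) 1 | f t = 0}, u < v →
    (∀ w ∈ {t ∈ Set.Icc (0:ℝ) 1 | f t = 0}, w ≤ u ∨ v ≤ w) →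
    ∃! p, p ∈ Set.Icc u v ∧ f p = 1 := by
  intro u hu v hv huv hcons
  rw [zero_set_eq h] at hu hv
  simp only [Finset.coe_image, Set.mem_image, Finset.mem_coe, Finset.mem_Iic] at hu hv
  obtain ⟨i, hik, rfl⟩ := hu
  obtain ⟨i', hik', rfl⟩ := hv
  have hii : i < i' := by
    have := (h.lt_iff (by omega) (by omega)).mp huv
    omega
  have hkk : 2 * i + 2 ≤ 2 * k := by omega
  have hw : x (2 * i + 2) ∈ {t ∈ Set.Icc (0:ℝ) 1 | f t = 0} := by
    refine ⟨h.mem hkk, ?_⟩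
    have hv2 := h.val (2 * i + 2) hkk
    rwa [if_pos ⟨i + 1, by ring⟩] at hv2
  have hveq : x (2 * i') = x (2 * i + 2) := by
    rcases hcons _ hw with hle | hle
    · exact absurd (h.mono (by omega) hkk) (not_lt.mpr hle)
    · exact le_antisymm hle (h.mono_le (by omega) (by omega))
  have hp1 : x (2 * i + 1) ∈ Set.Icc (x (2 * i)) (x (2 * i')) := by
    rw [hveq]
    exact ⟨h.mono_le (by omega) (by omega), h.mono_le (by omega) hkk⟩
  have hpv : f (x (2 * i + 1)) = 1 := by
    have hv2 := h.val (2 * i + 1) (by omega)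
    rwa [if_neg (by simp [Nat.even_add_one, Nat.even_mul])] at hv2
  refine ⟨x (2 * i + 1), ⟨hp1, hpv⟩, ?_⟩
  rintro q ⟨hq1, hq2⟩
  have hq01 : q ∈ Set.Icc (0:ℝ) 1 := by
    constructor
    · exact le_trans (h.mem (j := 2 * i) (by omega)).1 hq1.1
    · exact le_trans hq1.2 (h.mem (j := 2 * i') (by omega)).2
  obtain ⟨j, hjk, rfl⟩ := h.eq_node hq01 (Or.inr hq2)
  have hev : ¬ Even j := by
    intro hc
    have hv2 := h.val j hjk
    rw [if_pos hc, hq2] at hv2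
    norm_num at hv2
  rw [hveq] at hq1
  have hj1 : 2 * i ≤ j := by
    by_contra hc
    exact absurd (h.mono (i := j) (j := 2 * i) (by omega) (by omega)) (not_lt.mpr hq1.1)
  have hj2 : j ≤ 2 * i + 2 := by
    by_contra hc
    exact absurd (h.mono (i := 2 * i + 2) (by omega) hjk) (not_lt.mpr hq1.2)
  have : j = 2 * i + 1 := by
    rcases Nat.even_or_odd j with he | ⟨m, hm⟩
    · exact absurd he hev
    · omega
  rw [this]

end TentAux

/-- The zero set of `W n` on `[0,1]` has exactly `2^n + 1` elements, the level-one
set has exactly `2^n` elements, and between any two consecutive zeros there is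
exactly one point where `W n` equals `1`. -/
theorem composed_triangles_zeros_and_peaks (a : ℕ → ℝ)
    (ha : ∀ i, a i ∈ Set.Ioo (0:ℝ) 1) (n : ℕ) :
    ({x ∈ Set.Icc (0:ℝ) 1 | W a n x = 0}).ncard = 2 ^ n + 1 ∧
    ({x ∈ Set.Icc (0:ℝ) 1 | W a n x = 1}).ncard = 2 ^ n ∧
    (∀ u ∈ {x ∈ Set.Icc (0:ℝ) 1 | W a n x = 0},
      ∀ v ∈ {x ∈ Set.Icc (0:ℝ) 1 | W a n x = 0}, u < v →
      (∀ w ∈ {x ∈ Set.Icc (0:ℝ) 1 | W a n x = 0}, w ≤ u ∨ v ≤ w) →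
      ∃! p, p ∈ Set.Icc u v ∧ W a n p = 1) := by
  obtain ⟨x, hx⟩ := TentAux.exists_inv a ha n
  have h2 : 2 ^ (n + 1) = 2 * 2 ^ n := by ring
  rw [h2] at hx
  exact ⟨TentAux.zero_set_card hx, TentAux.one_set_card hx, TentAux.between hx⟩
end

section
/- With peak parameters all equal to 1/2 (i.e., a_i = 1/2), the recurrence s_{i+1} = s_i(1-a_{i+1})a_{i+2} with s_0 = 1/4 gives s_i = 4^{-(i+1)}, and the function x - Σ_{i=0}^∞ 4^{-(i+1)} W_i(x) equals x² for all x ∈ [0,1], where W_i is the i+1-fold self-composition of the symmetric tent map. -/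
/-- The symmetric tent map. -/
noncomputable def tent (x : ℝ) : ℝ := if x ≤ 1 / 2 then 2 * x else 2 - 2 * x

lemma tent_mem {x : ℝ} (hx : x ∈ Set.Icc (0:ℝ) 1) : tent x ∈ Set.Icc (0:ℝ) 1 := by
  obtain ⟨h0, h1⟩ := hx
  unfold tent
  split <;> constructor <;> linarith

lemma tent_iter_mem {x : ℝ} (hx : x ∈ Set.Icc (0:ℝ) 1) (n : ℕ) :
    tent^[n] x ∈ Set.Icc (0:ℝ) 1 := by
  induction n with
  | zero => simpa using hx
  | succ n ih =>
    rw [Function.iterate_succ_apply']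
    exact tent_mem ih

lemma key (x : ℝ) : x - x ^ 2 = tent x / 4 + (tent x - (tent x) ^ 2) / 4 := by
  unfold tent
  split <;> ring

lemma partial_sum (x : ℝ) (N : ℕ) :
    x - x ^ 2 = (∑ i ∈ Finset.range N, (1 / 4 : ℝ) ^ (i + 1) * tent^[i + 1] x)
      + (tent^[N] x - (tent^[N] x) ^ 2) / 4 ^ N := by
  induction N with
  | zero => simp
  | succ N ih =>
    rw [ih, Finset.sum_range_succ]
    have h := key (tent^[N] x)
    rw [Function.iterate_succ_apply']
    have : (tent^[N] x - (tent^[N] x) ^ 2) / 4 ^ N =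
        ((tent (tent^[N] x)) / 4 + (tent (tent^[N] x) - (tent (tent^[N] x)) ^ 2) / 4) / 4 ^ N := by
      rw [← h]
    rw [this]
    have e1 : ((1:ℝ)/4)^(N+1) = (4^(N+1))⁻¹ := by rw [one_div, inv_pow]
    have h4 : (4:ℝ)^N ≠ 0 := by positivity
    have h4' : (4:ℝ)^(N+1) ≠ 0 := by positivity
    rw [e1, pow_succ]
    field_simp
    ring

/-- With all peaks at `1/2`, the recurrence `s (i+1) = s i * (1 - 1/2) * (1/2)`
with `s 0 = 1/4` gives `s i = 4 ^ (-(i+1))`, and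
`x - ∑_{i=0}^∞ 4^{-(i+1)} W i x = x ^ 2` on `[0,1]`, where `W i = tent^[i+1]`. -/
theorem yarotsky_squaring (s : ℕ → ℝ) (hs0 : s 0 = 1 / 4)
    (hrec : ∀ i, s (i + 1) = s i * (1 - 1 / 2) * (1 / 2)) :
    (∀ i, s i = (1 / 4 : ℝ) ^ (i + 1)) ∧
    (∀ x ∈ Set.Icc (0:ℝ) 1,
      x - ∑' i : ℕ, (1 / 4 : ℝ) ^ (i + 1) * tent^[i + 1] x = x ^ 2) := by
  constructor
  · intro i
    induction i with
    | zero => simpa using hs0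
    | succ i ih => rw [hrec, ih]; ring
  · intro x hx
    have hsummable : Summable (fun i : ℕ => (1 / 4 : ℝ) ^ (i + 1) * tent^[i + 1] x) := by
      have hg : Summable (fun i : ℕ => (1 / 4 : ℝ) ^ (i + 1)) :=
        (summable_geometric_of_lt_one (r := 1/4) (by norm_num) (by norm_num)).mul_right (1/4) |>.congr
          (fun i => by rw [pow_succ])
      refine Summable.of_nonneg_of_le ?_ ?_ hg
      · intro i
        obtain ⟨h0, h1⟩ := tent_iter_mem hx (i + 1)
        positivity
      · intro i
        have h := tent_iter_mem hx (i + 1)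
        have h1 : tent^[i+1] x ≤ 1 := h.2
        nlinarith [pow_pos (by norm_num : (0:ℝ) < 1/4) (i+1)]
    have hlim : Filter.Tendsto
        (fun N => ∑ i ∈ Finset.range N, (1 / 4 : ℝ) ^ (i + 1) * tent^[i + 1] x)
        Filter.atTop (nhds (x - x ^ 2)) := by
      have heq : ∀ N, ∑ i ∈ Finset.range N, (1 / 4 : ℝ) ^ (i + 1) * tent^[i + 1] x
          = (x - x ^ 2) - (tent^[N] x - (tent^[N] x) ^ 2) / 4 ^ N := by
        intro N
        have := partial_sum x N
        linarith
      simp_rw [heq]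
      have : Filter.Tendsto (fun N : ℕ => (tent^[N] x - (tent^[N] x) ^ 2) / 4 ^ N)
          Filter.atTop (nhds 0) := by
        apply squeeze_zero_norm (a := fun N : ℕ => (1/4 : ℝ) ^ N)
        · intro N
          have h := tent_iter_mem hx N
          have h1 : (0:ℝ) ≤ tent^[N] x - (tent^[N] x) ^ 2 := by nlinarith [h.1, h.2]
          have h2 : tent^[N] x - (tent^[N] x) ^ 2 ≤ 1 := by nlinarith [h.1, h.2]
          have h4 : (0:ℝ) < 4 ^ N := by positivity
          rw [Real.norm_eq_abs, abs_of_nonneg (by positivity)]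
          rw [div_le_iff₀ h4]
          calc tent^[N] x - (tent^[N] x) ^ 2 ≤ 1 := h2
            _ ≤ (1/4 : ℝ) ^ N * 4 ^ N := by
                rw [← mul_pow]; norm_num
        · exact tendsto_pow_atTop_nhds_zero_of_lt_one (by norm_num) (by norm_num)
      have := Filter.Tendsto.sub (tendsto_const_nhds (x := x - x^2) (f := Filter.atTop (α := ℕ))) this
      simpa using this
    have := (hsummable.hasSum_iff_tendsto_nat).mpr hlim
    rw [this.tsum_eq]
    ring
end

section
/- Let W_i = T_{a_i} ∘ ... ∘ T_{a_0} with a_i ∈ (0,1) and let s_i > 0 satisfy s_{i+1} = s_i(1-a_{i+1})a_{i+2}. Then the function F(x) = Σ_{i=0}^∞ s_i W_i(x) on [0,1] is concave (equivalently, C - F is convex for the appropriate sign convention); i.e., the piecewise-linear partial sums f_n = Σ_{i=0}^{n-1} s_i W_i have derivative sequences that are monotone decreasing across the ordered breakpoints. -/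
/-!
Peeling off the first tent map, the partial sum `f_{n+1}` for `(a, s)` is `φ ∘ T (a 0)` with
`φ y = s 0 * y + g y`, where `g` is the partial sum `f_n` for the shifted sequences. Induct on
`n`, for all admissible `(a, s)` at once, on: `f_n` is concave on `[0,1]` and
`f_n ≤ s 0 / a 1 * T (a 0)`. By the recurrence, the bound for `g` reads
`g ≤ s 0 * (1 - a 1) * T (a 1)`, so `φ ≤ s 0 ≤ φ 1` (hence the concave `φ` is monotone and
`φ ∘ T (a 0)` is concave) and `φ y ≤ s 0 / a 1 * y` (which propagates the bound). The bound also
makes the partial sums of the nonnegative series uniformly bounded, so `F` is a pointwise limit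
of concave functions.
-/

open Set Filter Topology

theorem ConcaveOn.monotoneOn_of_le_right {f : ℝ → ℝ} {a b : ℝ}
    (hf : ConcaveOn ℝ (Icc a b) f) (hb : ∀ y ∈ Icc a b, f y ≤ f b) :
    MonotoneOn f (Icc a b) := by
  intro x hx y hy hxy
  have hmin := hf.ge_on_segment hx (right_mem_Icc.2 (hx.1.trans hx.2))
    (by rw [segment_eq_Icc hx.2]; exact ⟨hxy, hy.2⟩)
  rwa [min_eq_left (hb x hx)] at hmin

theorem ConcaveOn.of_tendsto {ι E : Type*} [AddCommGroup E] [Module ℝ E]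
    {l : Filter ι} [l.NeBot]
    {f : ι → E → ℝ} {g : E → ℝ} {s : Set E} (hf : ∀ n, ConcaveOn ℝ s (f n))
    (hlim : ∀ x ∈ s, Tendsto (fun n => f n x) l (𝓝 (g x))) : ConcaveOn ℝ s g := by
  obtain ⟨n⟩ := l.nonempty_of_neBot
  refine ⟨(hf n).1, fun x hx y hy μ ν hμ hν hμν => ?_⟩
  exact le_of_tendsto_of_tendsto' (((hlim x hx).const_smul μ).add ((hlim y hy).const_smul ν))
    (hlim _ ((hf n).1 hx hy hμ hν hμν)) fun n => (hf n).2 hx hy hμ hν hμν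

section Tent

variable {a : ℝ} (ha : a ∈ Ioo (0 : ℝ) 1)
include ha

theorem T_eq_min : T a = fun x => min (x / a) ((1 - x) / (1 - a)) := by
  obtain ⟨ha0, ha1⟩ := ha
  have h1a : 0 < 1 - a := sub_pos.2 ha1
  funext x
  unfold T
  split_ifs with hx
  · rw [min_eq_left (by rw [div_le_div_iff₀ ha0 h1a]; nlinarith)]
  · rw [min_eq_right (by rw [div_le_div_iff₀ h1a ha0]; nlinarith)]
    field_simp
    ring

theorem T_le_left (x : ℝ) : T a x ≤ x / a := by
  rw [T_eq_min ha]; exact min_le_left _ _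

theorem T_le_right (x : ℝ) : T a x ≤ (1 - x) / (1 - a) := by
  rw [T_eq_min ha]; exact min_le_right _ _

theorem concaveOn_T : ConcaveOn ℝ univ (T a) := by
  rw [T_eq_min ha]
  refine ConcaveOn.inf ?_ ?_
  · exact ((concaveOn_id convex_univ).smul (inv_nonneg.2 ha.1.le)).congr
      fun x _ => by simp [div_eq_inv_mul]
  · exact (((concaveOn_const 1 convex_univ).sub (convexOn_id convex_univ)).smul
      (inv_nonneg.2 (sub_pos.2 ha.2).le)).congr fun x _ => by simp [div_eq_inv_mul]

theorem mapsTo_T : MapsTo (T a) (Icc 0 1) (Icc 0 1) := by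
  obtain ⟨ha0, ha1⟩ := ha
  intro x ⟨hx0, hx1⟩
  unfold T
  split_ifs with h
  · exact ⟨by positivity, (div_le_one ha0).2 h⟩
  · have hxa : (x - a) / (1 - a) ≤ 1 := (div_le_one (by linarith)).2 (by linarith)
    have hxa' : 0 ≤ (x - a) / (1 - a) := div_nonneg (by linarith) (by linarith)
    constructor <;> linarith

theorem image_T_Icc : T a '' Icc 0 1 = Icc 0 1 := by
  refine (mapsTo_T ha).image_subset.antisymm fun y ⟨hy0, hy1⟩ => ⟨a * y, ?_, ?_⟩
  · exact ⟨mul_nonneg ha.1.le hy0, by nlinarith [ha.1, ha.2]⟩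
  · rw [T, if_pos (by nlinarith [ha.1]), mul_div_cancel_left₀ _ ha.1.ne']

end Tent

theorem mapsTo_W {a : ℕ → ℝ} (ha : ∀ i, a i ∈ Ioo (0 : ℝ) 1) :
    ∀ n, MapsTo (W a n) (Icc 0 1) (Icc 0 1)
  | 0 => mapsTo_T (ha 0)
  | n + 1 => (mapsTo_T (ha (n + 1))).comp (mapsTo_W ha n)

theorem W_succ_eq_W_shift (a : ℕ → ℝ) :
    ∀ n x, W a (n + 1) x = W (fun i => a (i + 1)) n (T (a 0) x)
  | 0, _ => rfl
  | n + 1, x => congrArg (T (a (n + 2))) (W_succ_eq_W_shift a n x)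

noncomputable def partialSum (a s : ℕ → ℝ) (n : ℕ) (x : ℝ) : ℝ :=
  ∑ i ∈ Finset.range n, s i * W a i x

theorem partialSum_succ (a s : ℕ → ℝ) (n : ℕ) (x : ℝ) :
    partialSum a s (n + 1) x = s 0 * T (a 0) x +
      partialSum (fun i => a (i + 1)) (fun i => s (i + 1)) n (T (a 0) x) := by
  simp only [partialSum, Finset.sum_range_succ', W_succ_eq_W_shift]
  rw [add_comm]
  rfl

theorem partialSum_nonneg {a s : ℕ → ℝ} (ha : ∀ i, a i ∈ Ioo (0 : ℝ) 1) (hs : ∀ i, 0 ≤ s i)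
    (n : ℕ) {x : ℝ} (hx : x ∈ Icc (0 : ℝ) 1) : 0 ≤ partialSum a s n x :=
  Finset.sum_nonneg fun i _ => mul_nonneg (hs i) (mapsTo_W ha i hx).1

theorem concaveOn_comp_T_of_le {a b c : ℝ} {G : ℝ → ℝ} (ha : a ∈ Ioo (0 : ℝ) 1)
    (hb : b ∈ Ioo (0 : ℝ) 1) (hc : 0 ≤ c) (hG : ConcaveOn ℝ (Icc 0 1) G) (hG1 : 0 ≤ G 1)
    (hGle : ∀ y ∈ Icc (0 : ℝ) 1, G y ≤ c * (1 - b) * T b y) :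
    ConcaveOn ℝ (Icc 0 1) (fun x => c * T a x + G (T a x)) ∧
      ∀ x ∈ Icc (0 : ℝ) 1, c * T a x + G (T a x) ≤ c / b * T a x := by
  set φ : ℝ → ℝ := fun y => c * y + G y
  have hφ_le_c : ∀ y ∈ Icc (0 : ℝ) 1, φ y ≤ c := fun y hy => by
    have hT := mul_le_mul_of_nonneg_left (T_le_right hb y) (mul_nonneg hc (sub_pos.2 hb.2).le)
    have hlin : c * y + c * (1 - b) * ((1 - y) / (1 - b)) = c := by
      field_simp [(sub_pos.2 hb.2).ne']; ring
    linarith [hGle y hy]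
  have hφ_le_lin : ∀ y ∈ Icc (0 : ℝ) 1, φ y ≤ c / b * y := fun y hy => by
    have hT := mul_le_mul_of_nonneg_left (T_le_left hb y) (mul_nonneg hc (sub_pos.2 hb.2).le)
    have hlin : c * y + c * (1 - b) * (y / b) = c / b * y := by
      field_simp [hb.1.ne']; ring
    linarith [hGle y hy]
  have hφ_conc : ConcaveOn ℝ (Icc 0 1) φ :=
    ((concaveOn_id (convex_Icc 0 1)).smul hc).add hG
  have hφ_mono : MonotoneOn φ (Icc 0 1) :=
    hφ_conc.monotoneOn_of_le_right fun y hy => (hφ_le_c y hy).trans (by simp [φ, hG1])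
  refine ⟨ConcaveOn.comp (g := φ) ?_
    ((concaveOn_T ha).subset (subset_univ _) (convex_Icc 0 1)) ?_,
    fun x hx => hφ_le_lin _ (mapsTo_T ha hx)⟩
  all_goals rw [image_T_Icc ha]
  exacts [hφ_conc, hφ_mono]

theorem partialSum_concaveOn_and_le (n : ℕ) {a s : ℕ → ℝ} (ha : ∀ i, a i ∈ Ioo (0 : ℝ) 1)
    (hs : ∀ i, 0 ≤ s i) (hrec : ∀ i, s (i + 1) = s i * (1 - a (i + 1)) * a (i + 2)) :
    ConcaveOn ℝ (Icc 0 1) (partialSum a s n) ∧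
      ∀ x ∈ Icc (0 : ℝ) 1, partialSum a s n x ≤ s 0 / a 1 * T (a 0) x := by
  induction n generalizing a s with
  | zero =>
    refine ⟨(concaveOn_const 0 (convex_Icc 0 1)).congr fun x _ => by simp [partialSum],
      fun x hx => ?_⟩
    have hT := (mapsTo_T (ha 0) hx).1
    simp only [partialSum, Finset.range_zero, Finset.sum_empty]
    exact mul_nonneg (div_nonneg (hs 0) (ha 1).1.le) hT
  | succ n ih =>
    obtain ⟨hG, hGle⟩ := ih (fun i => ha (i + 1)) (fun i => hs (i + 1)) fun i => hrec (i + 1)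
    have hscale : s 1 / a 2 = s 0 * (1 - a 1) := by
      rw [hrec 0]; field_simp [(ha 2).1.ne']
    simp only [zero_add, Nat.reduceAdd, hscale] at hGle
    have hstep := concaveOn_comp_T_of_le (ha 0) (ha 1) (hs 0) hG
      (partialSum_nonneg (fun i => ha (i + 1)) (fun i => hs (i + 1)) n ⟨zero_le_one, le_rfl⟩)
      hGle
    simpa only [← partialSum_succ] using hstep

theorem summable_mul_W {a s : ℕ → ℝ} (ha : ∀ i, a i ∈ Ioo (0 : ℝ) 1) (hs : ∀ i, 0 ≤ s i)
    (hrec : ∀ i, s (i + 1) = s i * (1 - a (i + 1)) * a (i + 2)) {x : ℝ}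
    (hx : x ∈ Icc (0 : ℝ) 1) : Summable fun i => s i * W a i x := by
  refine summable_of_sum_range_le (c := s 0 / a 1)
    (fun i => mul_nonneg (hs i) (mapsTo_W ha i hx).1) fun n => ?_
  calc partialSum a s n x ≤ s 0 / a 1 * T (a 0) x :=
        (partialSum_concaveOn_and_le n ha hs hrec).2 x hx
    _ ≤ s 0 / a 1 := mul_le_of_le_one_right (div_nonneg (hs 0) (ha 1).1.le)
      (mapsTo_T (ha 0) hx).2

/-- With coefficients obeying the differentiability recurrence, the sum
`F x = ∑ s i * W i x` of scaled composed triangle waves is concave on `[0,1]`. -/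
theorem composed_triangle_sum_concave (a : ℕ → ℝ) (s : ℕ → ℝ)
    (ha : ∀ i, a i ∈ Set.Ioo (0:ℝ) 1) (hs : ∀ i, 0 < s i)
    (hrec : ∀ i, s (i + 1) = s i * (1 - a (i + 1)) * a (i + 2)) :
    ConcaveOn ℝ (Set.Icc (0:ℝ) 1) (fun x => ∑' i : ℕ, s i * W a i x) := by
  have hs' : ∀ i, 0 ≤ s i := fun i => (hs i).le
  exact ConcaveOn.of_tendsto (l := atTop)
    (fun n => (partialSum_concaveOn_and_le n ha hs' hrec).1)
    fun x hx => (summable_mul_W ha hs' hrec hx).hasSum.tendsto_sum_nat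
end

section
/- Let F(x) = Σ s_i W_i(x) with coefficients obeying s_{i+1} = s_i(1-a_{i+1})a_{i+2}, and let f_n be the n-th partial sum. Then f_n(x) = F(x) for every x ∈ V_n (the zero set of W_n), f_n ≤ F pointwise, and sup_{x∈[0,1]} (F(x) - f_n(x)) = s_n, so the approximation error decays exponentially in n. -/
section aux

variable {a x t : ℝ}

lemma T_mem (ha : a ∈ Set.Ioo (0:ℝ) 1) (hx : x ∈ Set.Icc (0:ℝ) 1) :
    T a x ∈ Set.Icc (0:ℝ) 1 := by
  obtain ⟨ha0, ha1⟩ := ha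
  obtain ⟨hx0, hx1⟩ := hx
  unfold T
  split_ifs with h
  · constructor
    · positivity
    · rw [div_le_one ha0]; exact h
  · push_neg at h
    constructor
    · have h1 : (x - a) / (1 - a) ≤ 1 := by
        rw [div_le_one (by linarith)]; linarith
      linarith
    · have h2 : 0 ≤ (x - a) / (1 - a) := by
        apply div_nonneg <;> linarith
      linarith

lemma T_zero (ha : 0 < a) : T a 0 = 0 := by
  unfold T
  rw [if_pos ha.le, zero_div]

lemma T_one (ha1 : a < 1) : T a 1 = 0 := by
  unfold T
  rw [if_neg (by linarith), div_self (by linarith : (1:ℝ) - a ≠ 0)]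
  ring

/-- inequality (B): `a * T a x ≤ x` -/
lemma T_ineqB (ha : a ∈ Set.Ioo (0:ℝ) 1) (hx : x ∈ Set.Icc (0:ℝ) 1) :
    a * T a x ≤ x := by
  obtain ⟨ha0, ha1⟩ := ha
  obtain ⟨hx0, hx1⟩ := hx
  unfold T
  split_ifs with h
  · rw [mul_div_cancel₀ _ (ne_of_gt ha0)]
  · push_neg at h
    have h1a : (0:ℝ) < 1 - a := by linarith
    have hu : (x - a) / (1 - a) * (1 - a) = x - a := div_mul_cancel₀ _ (ne_of_gt h1a)
    have hu0 : 0 ≤ (x - a) / (1 - a) := div_nonneg (by linarith) h1a.le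
    nlinarith [hu, hu0]

/-- inequality (A): `(1 - a) * T a x ≤ 1 - x` -/
lemma T_ineqA (ha : a ∈ Set.Ioo (0:ℝ) 1) (hx : x ∈ Set.Icc (0:ℝ) 1) :
    (1 - a) * T a x ≤ 1 - x := by
  obtain ⟨ha0, ha1⟩ := ha
  obtain ⟨hx0, hx1⟩ := hx
  unfold T
  split_ifs with h
  · have hv : x / a * a = x := div_mul_cancel₀ _ (ne_of_gt ha0)
    have hvle : x / a ≤ 1 := by rw [div_le_one ha0]; exact h
    have hv0 : 0 ≤ x / a := div_nonneg hx0 ha0.le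
    nlinarith [hv, hvle, hv0]
  · push_neg at h
    have h1a : (0:ℝ) < 1 - a := by linarith
    have hu : (x - a) / (1 - a) * (1 - a) = x - a := div_mul_cancel₀ _ (ne_of_gt h1a)
    nlinarith [hu]

lemma T_surj (ha : a ∈ Set.Ioo (0:ℝ) 1) (ht : t ∈ Set.Icc (0:ℝ) 1) :
    T a (t * a) = t := by
  obtain ⟨ha0, ha1⟩ := ha
  obtain ⟨ht0, ht1⟩ := ht
  unfold T
  rw [if_pos (by nlinarith), mul_div_cancel_right₀ _ (ne_of_gt ha0)]

end aux

section Waux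

variable {a : ℕ → ℝ} {c : ℝ}

lemma ha_mem (hc : c ∈ Set.Ioo (0:ℝ) (1/2)) (ha : ∀ i, a i ∈ Set.Icc c (1 - c)) (i : ℕ) :
    a i ∈ Set.Ioo (0:ℝ) 1 := by
  obtain ⟨h1, h2⟩ := hc
  obtain ⟨h3, h4⟩ := ha i
  constructor <;> [linarith; linarith]

lemma W_mem (ha : ∀ i, a i ∈ Set.Ioo (0:ℝ) 1) {x : ℝ} (hx : x ∈ Set.Icc (0:ℝ) 1) (n : ℕ) :
    W a n x ∈ Set.Icc (0:ℝ) 1 := by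
  induction n with
  | zero => exact T_mem (ha 0) hx
  | succ n ih => exact T_mem (ha (n + 1)) ih

lemma W_succ (n : ℕ) (x : ℝ) : W a (n + 1) x = T (a (n + 1)) (W a n x) := rfl

lemma W_zero_of_le (ha : ∀ i, a i ∈ Set.Ioo (0:ℝ) 1) {x : ℝ} {n m : ℕ}
    (hnm : n ≤ m) (h : W a n x = 0) : W a m x = 0 := by
  induction m, hnm using Nat.le_induction with
  | base => exact h
  | succ m _ ih => rw [W_succ, ih]; exact T_zero (ha (m + 1)).1

lemma W_surj (ha : ∀ i, a i ∈ Set.Ioo (0:ℝ) 1) (n : ℕ) {t : ℝ} (ht : t ∈ Set.Icc (0:ℝ) 1) :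
    ∃ x ∈ Set.Icc (0:ℝ) 1, W a n x = t := by
  induction n generalizing t with
  | zero =>
    refine ⟨t * a 0, ?_, T_surj (ha 0) ht⟩
    obtain ⟨h1, h2⟩ := ha 0
    obtain ⟨h3, h4⟩ := ht
    constructor
    · positivity
    · nlinarith
  | succ n ih =>
    have hmem : t * a (n + 1) ∈ Set.Icc (0:ℝ) 1 := by
      obtain ⟨h1, h2⟩ := ha (n + 1)
      obtain ⟨h3, h4⟩ := ht
      constructor
      · positivity
      · nlinarith
    obtain ⟨x, hx, hWx⟩ := ih hmem
    refine ⟨x, hx, ?_⟩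
    rw [W_succ, hWx, T_surj (ha (n + 1)) ht]

end Waux

/-- The partial sum `f n` agrees with `F` on the zero set of `W n`, lies below `F`,
and the maximal error `sup (F - f n)` equals `s n`, which decays exponentially. -/
theorem partial_sum_error (a : ℕ → ℝ) (s : ℕ → ℝ) (c : ℝ) (hc : c ∈ Set.Ioo (0:ℝ) (1/2))
    (ha : ∀ i, a i ∈ Set.Icc c (1 - c)) (hs : ∀ i, 0 < s i)
    (hrec : ∀ i, s (i + 1) = s i * (1 - a (i + 1)) * a (i + 2)) (n : ℕ) :
    (∀ x ∈ Set.Icc (0:ℝ) 1, W a n x = 0 →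
      ∑ i ∈ Finset.range n, s i * W a i x = ∑' i : ℕ, s i * W a i x) ∧
    (∀ x ∈ Set.Icc (0:ℝ) 1,
      ∑ i ∈ Finset.range n, s i * W a i x ≤ ∑' i : ℕ, s i * W a i x) ∧
    IsGreatest
      ((fun x => (∑' i : ℕ, s i * W a i x) - ∑ i ∈ Finset.range n, s i * W a i x) ''
        Set.Icc (0:ℝ) 1) (s n) := by
  obtain ⟨hc0, hc2⟩ := hc
  have ha' : ∀ i, a i ∈ Set.Ioo (0:ℝ) 1 := ha_mem ⟨hc0, hc2⟩ ha
  -- geometric bound on s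
  set q : ℝ := (1 - c) * (1 - c) with hq
  have hq0 : 0 ≤ q := by nlinarith
  have hq1 : q < 1 := by nlinarith
  have hsq : ∀ i, s i ≤ s 0 * q ^ i := by
    intro i
    induction i with
    | zero => simp
    | succ i ih =>
      have h1 := (ha (i + 1)).1
      have h2 := (ha (i + 2)).2
      have h3 := (hs i)
      have h4 : s (i + 1) ≤ s i * q := by
        rw [hrec i, mul_assoc]
        apply mul_le_mul_of_nonneg_left _ h3.le
        have hA : 1 - a (i + 1) ≤ 1 - c := by linarith
        have hB : a (i + 2) ≤ 1 - c := h2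
        have hA0 : (0:ℝ) ≤ 1 - a (i + 1) := by have := (ha (i+1)).2; linarith
        have hB0 : (0:ℝ) ≤ a (i + 2) := by have := (ha (i+2)).1; linarith
        rw [hq]; nlinarith
      calc s (i + 1) ≤ s i * q := h4
        _ ≤ s 0 * q ^ i * q := mul_le_mul_of_nonneg_right ih hq0
        _ = s 0 * q ^ (i + 1) := by ring
  -- summability
  have hsummable : ∀ x ∈ Set.Icc (0:ℝ) 1, Summable (fun i => s i * W a i x) := by
    intro x hx
    apply Summable.of_nonneg_of_le
      (fun i => mul_nonneg (hs i).le (W_mem ha' hx i).1)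
      (fun i => ?_) ((summable_geometric_of_lt_one hq0 hq1).mul_left (s 0))
    calc s i * W a i x ≤ s i * 1 :=
          mul_le_mul_of_nonneg_left (W_mem ha' hx i).2 (hs i).le
      _ = s i := mul_one _
      _ ≤ s 0 * q ^ i := hsq i
  -- key finite bound with slack term
  have key_aux : ∀ x ∈ Set.Icc (0:ℝ) 1, ∀ m : ℕ,
      (∑ i ∈ Finset.range (m + 1), s (n + i) * W a (n + i) x)
        + s (n + m) * (1 - a (n + m + 1)) * W a (n + m + 1) x ≤ s n := by
    intro x hx m
    induction m with
    | zero =>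
      simp only [Nat.zero_add, Finset.range_one, Finset.sum_singleton, Nat.add_zero]
      have hA := T_ineqA (ha' (n + 1)) (W_mem ha' hx n)
      rw [← W_succ] at hA
      have hW0 := (W_mem ha' hx n).1
      have hsn := hs n
      nlinarith [mul_le_mul_of_nonneg_left hA (hs n).le]
    | succ m ih =>
      rw [Finset.sum_range_succ]
      simp only [show n + (m + 1) = n + m + 1 from by ring,
        show n + (m + 1) + 1 = n + m + 2 from by ring]
      have hstep : s (n + m + 1) * W a (n + m + 1) x
          + s (n + m + 1) * (1 - a (n + m + 2)) * W a (n + m + 2) x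
          ≤ s (n + m) * (1 - a (n + m + 1)) * W a (n + m + 1) x := by
        have hB := T_ineqB (ha' (n + m + 2)) (W_mem ha' hx (n + m + 1))
        rw [← W_succ] at hB
        have hB' : a (n + m + 2) * W a (n + m + 2) x ≤ W a (n + m + 1) x := hB
        have hrec' : s (n + m + 1) = s (n + m) * (1 - a (n + m + 1)) * a (n + m + 2) :=
          hrec (n + m)
        have h1 : (0:ℝ) < 1 - a (n + m + 1) := by
          have := (ha' (n + m + 1)).2; linarith
        have h2 : (0:ℝ) < a (n + m + 2) := (ha' (n + m + 2)).1
        have h3 : a (n + m + 2) < 1 := (ha' (n + m + 2)).2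
        have h4 := (W_mem ha' hx (n + m + 1)).1
        have h5 := (W_mem ha' hx (n + m + 2)).1
        have hsnm := hs (n + m)
        rw [hrec']
        nlinarith [mul_nonneg (mul_nonneg (mul_nonneg hsnm.le h1.le)
          (by linarith : (0:ℝ) ≤ 1 - a (n + m + 2)))
          (by linarith : (0:ℝ) ≤ W a (n + m + 1) x - a (n + m + 2) * W a (n + m + 2) x)]
      linarith [ih]
  have key : ∀ x ∈ Set.Icc (0:ℝ) 1, ∀ m : ℕ,
      (∑ i ∈ Finset.range m, s (i + n) * W a (i + n) x) ≤ s n := by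
    intro x hx m
    have hcomm : ∀ i : ℕ, s (i + n) * W a (i + n) x = s (n + i) * W a (n + i) x := by
      intro i; rw [Nat.add_comm i n]
    rw [Finset.sum_congr rfl (fun i _ => hcomm i)]
    match m with
    | 0 => simpa using (hs n).le
    | m + 1 =>
      have := key_aux x hx m
      have hnn : 0 ≤ s (n + m) * (1 - a (n + m + 1)) * W a (n + m + 1) x := by
        apply mul_nonneg (mul_nonneg (hs (n + m)).le _) (W_mem ha' hx (n + m + 1)).1
        have := (ha' (n + m + 1)).2; linarith
      linarith
  -- tail decomposition
  have hsplit : ∀ x ∈ Set.Icc (0:ℝ) 1,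
      (∑ i ∈ Finset.range n, s i * W a i x) + (∑' i : ℕ, s (i + n) * W a (i + n) x)
        = ∑' i : ℕ, s i * W a i x := by
    intro x hx
    exact Summable.sum_add_tsum_nat_add n (hsummable x hx)
  have htail_nonneg : ∀ x ∈ Set.Icc (0:ℝ) 1,
      0 ≤ ∑' i : ℕ, s (i + n) * W a (i + n) x := by
    intro x hx
    exact tsum_nonneg (fun i => mul_nonneg (hs (i + n)).le (W_mem ha' hx (i + n)).1)
  refine ⟨?_, ?_, ?_⟩
  · -- equality on zero set
    intro x hx hW
    have htail : (∑' i : ℕ, s (i + n) * W a (i + n) x) = 0 := by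
      have : ∀ i : ℕ, s (i + n) * W a (i + n) x = 0 := by
        intro i
        rw [W_zero_of_le ha' (Nat.le_add_left n i) hW, mul_zero]
      simp [this]
    have := hsplit x hx
    rw [htail, add_zero] at this
    exact this
  · -- inequality
    intro x hx
    have := hsplit x hx
    linarith [htail_nonneg x hx]
  · constructor
    · -- attained at a peak
      obtain ⟨x, hx, hWx⟩ := W_surj ha' n (t := 1) ⟨zero_le_one, le_refl 1⟩
      refine ⟨x, hx, ?_⟩
      show (∑' i : ℕ, s i * W a i x) - ∑ i ∈ Finset.range n, s i * W a i x = s n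
      have hnext : W a (n + 1) x = 0 := by
        rw [W_succ, hWx]; exact T_one (ha' (n + 1)).2
      have htail : (∑' i : ℕ, s (i + n) * W a (i + n) x) = s n := by
        rw [tsum_eq_single 0 ?_]
        · simp [hWx]
        · intro i hi
          have hi1 : n + 1 ≤ i + n := by omega
          rw [W_zero_of_le ha' hi1 hnext, mul_zero]
      have := hsplit x hx
      rw [htail] at this
      linarith
    · -- upper bound
      rintro y ⟨x, hx, rfl⟩
      have htail_le : (∑' i : ℕ, s (i + n) * W a (i + n) x) ≤ s n := by
        apply Real.tsum_le_of_sum_range_le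
          (fun i => mul_nonneg (hs (i + n)).le (W_mem ha' hx (i + n)).1)
        exact key x hx
      have := hsplit x hx
      show (∑' i : ℕ, s i * W a i x) - ∑ i ∈ Finset.range n, s i * W a i x ≤ s n
      linarith
end

section
/- Let (a_i) ⊂ [c, 1-c] with c ∈ (0,1/2) and s_{i+1} = s_i(1-a_{i+1})a_{i+2}, s_0 > 0. At any peak x of W_i, the one-sided derivatives of the tail E_i = Σ_{n≥i} s_n W_n satisfy: the sum s_i - (1/(1-a_{i+1}))(s_{i+1} + Σ_{n=i+2}^∞ s_n ∏_{k=i+2}^n (1/a_k)) equals 0; i.e., the discontinuity in the derivative introduced by s_i W_i at its peaks is exactly cancelled by the subsequent terms. -/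
/-- At any peak `x` of `W i`, the derivative discontinuity introduced by
`s i * W i` is exactly cancelled by the subsequent terms:
`s i - (1/(1 - a (i+1))) * (s (i+1) + ∑_{n=i+2}^∞ s n ∏_{k=i+2}^n (1 / a k)) = 0`
(the series converging). -/
theorem peak_derivative_cancellation (a : ℕ → ℝ) (s : ℕ → ℝ) (c : ℝ)
    (hc : c ∈ Set.Ioo (0:ℝ) (1/2)) (ha : ∀ k, a k ∈ Set.Icc c (1 - c))
    (hs0 : 0 < s 0)
    (hrec : ∀ k, s (k + 1) = s k * (1 - a (k + 1)) * a (k + 2))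
    (i : ℕ) (x : ℝ) (hx : x ∈ Set.Icc (0:ℝ) 1) (hpeak : W a i x = 1) :
    Summable (fun m : ℕ =>
      s (i + 2 + m) * ∏ k ∈ Finset.Icc (i + 2) (i + 2 + m), (1 / a k)) ∧
    s i - (1 / (1 - a (i + 1))) *
      (s (i + 1) +
        ∑' m : ℕ, s (i + 2 + m) * ∏ k ∈ Finset.Icc (i + 2) (i + 2 + m), (1 / a k))
      = 0 := by
  obtain ⟨hc0, hc2⟩ := hc
  have hapos : ∀ k, 0 < a k := fun k => lt_of_lt_of_le hc0 (ha k).1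
  have ha1 : ∀ k, 0 < 1 - a k := fun k => by
    have := (ha k).2; linarith
  have halt : ∀ k, a k ≤ 1 - c := fun k => (ha k).2
  have hspos : ∀ n, 0 < s n := by
    intro n
    induction n with
    | zero => exact hs0
    | succ n ih =>
      rw [hrec n]
      exact mul_pos (mul_pos ih (ha1 _)) (hapos _)
  -- C and f
  set C : ℝ := s i * (1 - a (i + 1)) with hC
  have hCpos : 0 < C := mul_pos (hspos i) (ha1 _)
  set f : ℕ → ℝ := fun m => C * ∏ j ∈ Finset.range (m + 1), (1 - a (i + 2 + j)) with hf
  have hfpos : ∀ m, 0 < f m := fun m =>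
    mul_pos hCpos (Finset.prod_pos fun j _ => ha1 _)
  have hfsucc : ∀ m, f (m + 1) = f m * (1 - a (i + 2 + (m + 1))) := by
    intro m
    simp only [hf, Finset.prod_range_succ]
    ring
  -- closed form for the terms
  set t : ℕ → ℝ := fun m =>
    s (i + 2 + m) * ∏ k ∈ Finset.Icc (i + 2) (i + 2 + m), (1 / a k) with ht
  have hkey : ∀ m, t m = f m * a (i + 3 + m) := by
    intro m
    induction m with
    | zero =>
      have e2 := hrec (i + 1)
      rw [show i+1+1 = i+2 by omega, show i+1+2 = i+3 by omega, hrec i] at e2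
      have hne : a (i + 2) ≠ 0 := ne_of_gt (hapos _)
      simp only [ht, hf, hC, Nat.add_zero, Finset.Icc_self, Finset.prod_singleton,
        Finset.range_one, Finset.prod_range_zero, Finset.prod_range_succ, one_mul]
      rw [e2]
      field_simp
    | succ m ih =>
      have e5 : i + 2 + (m + 1) = i + 2 + m + 1 := by omega
      have e3 : i + 3 + m = i + 2 + m + 1 := by omega
      have e4 : i + 3 + (m + 1) = i + 2 + m + 2 := by omega
      have hIcc : ∏ k ∈ Finset.Icc (i + 2) (i + 2 + m + 1), (1 / a k) =
          (∏ k ∈ Finset.Icc (i + 2) (i + 2 + m), (1 / a k)) * (1 / a (i + 2 + m + 1)) :=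
        Finset.prod_Icc_succ_top (by omega) _
      have hne : a (i + 2 + m + 1) ≠ 0 := ne_of_gt (hapos _)
      simp only [ht] at ih ⊢
      rw [e3] at ih
      rw [e5, hIcc, hrec (i + 2 + m), hfsucc m, e5, e4]
      calc s (i + 2 + m) * (1 - a (i + 2 + m + 1)) * a (i + 2 + m + 2) *
            ((∏ k ∈ Finset.Icc (i + 2) (i + 2 + m), (1 / a k)) * (1 / a (i + 2 + m + 1)))
          = (s (i + 2 + m) * ∏ k ∈ Finset.Icc (i + 2) (i + 2 + m), (1 / a k)) *
            ((1 - a (i + 2 + m + 1)) * a (i + 2 + m + 2) * (1 / a (i + 2 + m + 1))) := by ring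
        _ = f m * a (i + 2 + m + 1) *
            ((1 - a (i + 2 + m + 1)) * a (i + 2 + m + 2) * (1 / a (i + 2 + m + 1))) := by rw [ih]
        _ = f m * (1 - a (i + 2 + m + 1)) * a (i + 2 + m + 2) := by
            field_simp
  -- t is a telescoping difference
  have htel : ∀ m, t m = f m - f (m + 1) := by
    intro m
    rw [hkey m, hfsucc m]
    have : i + 2 + (m + 1) = i + 3 + m := by omega
    rw [this]; ring
  -- f tends to 0
  have hftends : Filter.Tendsto f Filter.atTop (nhds 0) := by
    have hb : ∀ m, f m ≤ C * (1 - c) ^ m := by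
      intro m
      have h1 : ∏ j ∈ Finset.range (m + 1), (1 - a (i + 2 + j)) ≤ (1 - c) ^ (m + 1) := by
        calc ∏ j ∈ Finset.range (m + 1), (1 - a (i + 2 + j))
            ≤ ∏ _j ∈ Finset.range (m + 1), (1 - c) :=
              Finset.prod_le_prod (fun j _ => le_of_lt (ha1 _))
                (fun j _ => by have := (ha (i + 2 + j)).1; linarith)
          _ = (1 - c) ^ (m + 1) := by simp
      have h2 : (1 - c : ℝ) ^ (m + 1) ≤ (1 - c) ^ m := by
        apply pow_le_pow_of_le_one (by linarith) (by linarith) (by omega)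
      calc f m ≤ C * (1 - c) ^ (m + 1) := by
            exact mul_le_mul_of_nonneg_left h1 (le_of_lt hCpos)
        _ ≤ C * (1 - c) ^ m := mul_le_mul_of_nonneg_left h2 (le_of_lt hCpos)
    have hg : Filter.Tendsto (fun m => C * (1 - c) ^ m) Filter.atTop (nhds 0) := by
      have := tendsto_pow_atTop_nhds_zero_of_lt_one (by linarith : (0:ℝ) ≤ 1 - c)
        (by linarith : (1 - c : ℝ) < 1)
      simpa using this.const_mul C
    exact squeeze_zero (fun m => le_of_lt (hfpos m)) hb hg
  -- HasSum t (f 0)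
  have htnn : ∀ m, 0 ≤ t m := by
    intro m
    rw [hkey m]
    exact le_of_lt (mul_pos (hfpos m) (hapos _))
  have hHasSum : HasSum t (f 0) := by
    rw [hasSum_iff_tendsto_nat_of_nonneg htnn]
    have : ∀ n, ∑ m ∈ Finset.range n, t m = f 0 - f n := by
      intro n
      calc ∑ m ∈ Finset.range n, t m = ∑ m ∈ Finset.range n, (f m - f (m + 1)) :=
            Finset.sum_congr rfl (fun m _ => htel m)
        _ = f 0 - f n := Finset.sum_range_sub' f n
    simp_rw [this]
    simpa using (tendsto_const_nhds (x := f 0)).sub hftends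
  refine ⟨hHasSum.summable, ?_⟩
  have htsum : ∑' m, t m = f 0 := hHasSum.tsum_eq
  show s i - (1 / (1 - a (i + 1))) * (s (i + 1) + ∑' m, t m) = 0
  rw [htsum, hrec i]
  have hf0 : f 0 = s i * (1 - a (i + 1)) * (1 - a (i + 2)) := by
    simp [hf, hC]
  rw [hf0]
  have hne : (1 - a (i + 1)) ≠ 0 := ne_of_gt (ha1 _)
  field_simp
  ring
end
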